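/- For each r ∈ {1,…,7}, the 3-dimensional subspace span(h^r·μ₃) of ℝ⁶ contains the vector ν₃ = (1,1,1,0,0,0)ᵀ, where h = [[P₃,P₄],[-P₄,P₃]] and μ₃ = [I₃; 0₃ₓ₃]. -/

import Mathlib

open Matrix

noncomputable def P3 : Matrix (Fin 3) (Fin 3) ℝ :=
  (1/4 : ℝ) • !![1, 0, 1; 1, 1, 0; 0, 1, 1]

noncomputable def P4 : Matrix (Fin 3) (Fin 3) ℝ :=
  (Real.sqrt 3 / 12) • !![1, 0, -1; -1, 1, 0; 0, -1, 1]

noncomputable def hMat : Matrix (Fin 3 ⊕ Fin 3) (Fin 3 ⊕ Fin 3) ℝ :=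
  Matrix.fromBlocks P3 P4 (-P4) P3

/-- μ₃ = [I₃; 0] ∈ ℝ^{6×3}. -/
noncomputable def mu3 : Matrix (Fin 3 ⊕ Fin 3) (Fin 3) ℝ := Matrix.fromRows 1 0

/-- ν₃ = (1,1,1,0,0,0) ∈ ℝ⁶. -/
def nu3 : Fin 3 ⊕ Fin 3 → ℝ := Sum.elim (fun _ => 1) (fun _ => 0)

/- ν₃ is an eigenvector of h for the eigenvalue 1/2: the rows of P₃ sum to 1/2 and those of P₄
to 0. Since μ₃ c = (c, 0), the vector c = 2^r·(1,1,1) gives h^r μ₃ c = 2^r h^r ν₃ = ν₃. -/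

theorem Matrix.pow_mulVec_of_mulVec_eq_smul {n R : Type*} [Fintype n] [DecidableEq n]
    [CommSemiring R] {A : Matrix n n R} {c : R} {v : n → R} (hv : A *ᵥ v = c • v) (r : ℕ) :
    (A ^ r) *ᵥ v = c ^ r • v := by
  induction r with
  | zero => simp
  | succ r ih => rw [pow_succ', ← mulVec_mulVec, ih, mulVec_smul, hv, smul_smul, pow_succ]

theorem Matrix.fromBlocks_mulVec_sumElim_zero {l m R : Type*} [Fintype l] [Fintype m]
    [CommSemiring R] (A : Matrix l l R) (B : Matrix l m R) (C : Matrix m l R) (D : Matrix m m R)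
    {c : R} {v : l → R} (hA : A *ᵥ v = c • v) (hC : C *ᵥ v = 0) :
    fromBlocks A B C D *ᵥ Sum.elim v 0 = c • Sum.elim v 0 := by
  ext (i | i) <;> simp [fromBlocks_mulVec, hA, hC]

theorem P3_mulVec_one : P3 *ᵥ (fun _ => 1) = (1 / 2 : ℝ) • fun _ => 1 := by
  ext i; fin_cases i <;> simp [P3, mulVec, dotProduct, Fin.sum_univ_three] <;> norm_num

theorem P4_mulVec_one : P4 *ᵥ (fun _ => 1) = 0 := by
  ext i; fin_cases i <;> simp [P4, mulVec, dotProduct, Fin.sum_univ_three]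

theorem nu3_eq_sumElim : nu3 = Sum.elim (fun _ => 1) 0 := rfl

theorem hMat_mulVec_nu3 : hMat *ᵥ nu3 = (1 / 2 : ℝ) • nu3 := by
  rw [nu3_eq_sumElim, hMat]
  exact fromBlocks_mulVec_sumElim_zero _ _ _ _ P3_mulVec_one
    (by rw [neg_mulVec, P4_mulVec_one, neg_zero])

theorem mu3_mulVec (v : Fin 3 → ℝ) : mu3 *ᵥ v = Sum.elim v 0 := by
  simp [mu3, fromRows_mulVec]

theorem mu3_mulVec_one : mu3 *ᵥ (fun _ => 1) = nu3 := by
  rw [mu3_mulVec, nu3_eq_sumElim]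

theorem nu3_in_span_general (r : ℕ) :
    nu3 ∈ LinearMap.range (hMat ^ r * mu3).mulVecLin := by
  refine ⟨(2 : ℝ) ^ r • fun _ => 1, ?_⟩
  rw [mulVecLin_apply, ← mulVec_mulVec, mulVec_smul, mu3_mulVec_one, mulVec_smul,
    pow_mulVec_of_mulVec_eq_smul hMat_mulVec_nu3, smul_smul, ← mul_pow]
  norm_num

/-- For each `r ∈ {1,…,7}` the column span of `h^r · μ₃` contains ν₃. -/
theorem nu3_in_span (r : ℕ) (hr : 1 ≤ r ∧ r ≤ 7) :
    nu3 ∈ LinearMap.range (hMat ^ r * mu3).mulVecLin :=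
  nu3_in_span_general r
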